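/- Let (σ,ω) be a relatively simplicial pair in a lattice N, with σ = ⟨v₁,…,v_k, w₁,…,w_s⟩ and ω = ⟨w₁,…,w_s⟩ a face of σ. If there is no minimal vector of the pair (σ,ω) (i.e., every minimal vector of σ lies in ω), then the pair (σ,ω) is regular: N_σ = ℤv₁ ⊕ … ⊕ ℤv_k ⊕ N_ω, and the monoid σ ∩ N_σ equals ℕv₁ + … + ℕv_k + (ω ∩ N_ω). -/

import Mathlib

universe u

/-- The cone of all nonnegative rational combinations of a finite family of vectors. -/
def coneSpan {V : Type u} [AddCommGroup V] [Module ℚ V] {k : ℕ} (v : Fin k → V) : Set V :=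
  {x | ∃ c : Fin k → ℚ, (∀ i, 0 ≤ c i) ∧ x = ∑ i, c i • v i}

/-- A finitely generated cone is strictly convex if it contains no line,
i.e. `σ ∩ (−σ) = {0}`. -/
def StrictlyConvexCone {V : Type u} [AddCommGroup V] [Module ℚ V] {k : ℕ}
    (v : Fin k → V) : Prop :=
  ∀ x ∈ coneSpan v, -x ∈ coneSpan v → x = 0

/-- `w` is a primitive vector of the lattice `N`: a nonzero element of `N` generating the
monoid `ℚ≥0·w ∩ N`. -/
def IsPrimitive {V : Type u} [AddCommGroup V] [Module ℚ V] (N : Submodule ℤ V)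
    (w : V) : Prop :=
  w ∈ N ∧ w ≠ 0 ∧ ∀ x ∈ N, (∃ c : ℚ, 0 ≤ c ∧ x = c • w) → ∃ m : ℕ, x = (m : ℤ) • w

/-- `v` lists the vertices of the cone it spans: all entries are primitive and the number of
generators is minimal among generating families of the same cone. -/
def IsVertexFamily {V : Type u} [AddCommGroup V] [Module ℚ V] (N : Submodule ℤ V) {k : ℕ}
    (v : Fin k → V) : Prop :=
  (∀ i, IsPrimitive N (v i)) ∧
    ∀ (m : ℕ) (w : Fin m → V), coneSpan w = coneSpan v → k ≤ m

/-- The lattice `N_σ = N ∩ span_ℚ σ` of the cone spanned by `v`. -/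
def latticeOf {V : Type u} [AddCommGroup V] [Module ℚ V] (N : Submodule ℤ V) {k : ℕ}
    (v : Fin k → V) : Submodule ℤ V :=
  N ⊓ (Submodule.span ℚ (Set.range v)).restrictScalars ℤ

/-- The lattice `N ∩ span_ℚ S` of a subset `S`. -/
def latticeOfSet {V : Type u} [AddCommGroup V] [Module ℚ V] (N : Submodule ℤ V)
    (S : Set V) : Submodule ℤ V :=
  N ⊓ (Submodule.span ℚ S).restrictScalars ℤ

/-- A minimal vector of the cone spanned by `v`: a nonzero integral vector of the cone which
is not a vertex and cannot be written as a sum of two nonzero integral vectors of the cone. -/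
def IsMinimalVec {V : Type u} [AddCommGroup V] [Module ℚ V] (N : Submodule ℤ V) {k : ℕ}
    (v : Fin k → V) (x : V) : Prop :=
  x ∈ coneSpan v ∧ x ∈ N ∧ x ≠ 0 ∧ (∀ i, x ≠ v i) ∧
    ¬ ∃ y z : V, y ∈ coneSpan v ∧ y ∈ N ∧ y ≠ 0 ∧
      z ∈ coneSpan v ∧ z ∈ N ∧ z ≠ 0 ∧ x = y + z

/-- A small vector of the cone spanned by `v`: a nonzero integral vector of the cone which
cannot be written as a vertex plus an integral vector of the cone. -/
def IsSmallVec {V : Type u} [AddCommGroup V] [Module ℚ V] (N : Submodule ℤ V) {k : ℕ}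
    (v : Fin k → V) (x : V) : Prop :=
  x ∈ coneSpan v ∧ x ∈ N ∧ x ≠ 0 ∧
    ∀ i, ¬ ∃ y : V, y ∈ coneSpan v ∧ y ∈ N ∧ x = v i + y

/-- A cone is regular if its generators form part of a `ℤ`-basis of the lattice `N`. -/
def IsRegularCone {V : Type u} [AddCommGroup V] [Module ℚ V] (N : Submodule ℤ V) {k : ℕ}
    (v : Fin k → V) : Prop :=
  ∃ (ι : Type u) (b : Module.Basis ι ℤ ↥N) (f : Fin k → ι),
    Function.Injective f ∧ ∀ i, (b (f i) : V) = v i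

/-- The determinant of a simplicial cone, computed with respect to a `ℤ`-basis of its
lattice `N_σ`. -/
noncomputable def coneDet {V : Type u} [AddCommGroup V] [Module ℚ V] (N : Submodule ℤ V) {k : ℕ}
    (v : Fin k → V) (hv : ∀ i, v i ∈ latticeOf N v)
    (b : Module.Basis (Fin k) ℤ ↥(latticeOf N v)) : ℤ :=
  (Matrix.of fun i j => b.repr ⟨v j, hv j⟩ i).det

/-- `F` is a face of the cone `σ` (both given as subsets): the vanishing locus on `σ` of a
`ℚ`-linear functional which is nonnegative on `σ`. -/
def IsFaceOf {V : Type u} [AddCommGroup V] [Module ℚ V] (σ F : Set V) : Prop :=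
  ∃ φ : V →ₗ[ℚ] ℚ, (∀ x ∈ σ, 0 ≤ φ x) ∧ F = {x | x ∈ σ ∧ φ x = 0}

/-- `v₁, …, v_k` are `ℚ`-linearly independent from `w₁, …, w_s`. -/
def RelSimplicial {V : Type u} [AddCommGroup V] [Module ℚ V] {k s : ℕ}
    (v : Fin k → V) (w : Fin s → V) : Prop :=
  ∀ (c : Fin k → ℚ) (d : Fin s → ℚ),
    (∑ i, c i • v i) + ∑ j, d j • w j = 0 → ∀ i, c i = 0

/-- A cone (given as a subset, with its lattice) is irreducible if it admits no direct sum
decomposition `F = F₁ ⊕ ρ₁` in which `ρ₁` is a regular cone of positive dimension. -/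
def IsIrreducibleCone {V : Type u} [AddCommGroup V] [Module ℚ V] (N : Submodule ℤ V)
    (F : Set V) : Prop :=
  ¬ ∃ (m l : ℕ) (t : Fin m → V) (r : Fin l → V), 0 < l ∧
      IsRegularCone N r ∧
      F = coneSpan (Fin.append t r) ∧
      latticeOfSet N F = latticeOf N t ⊔ latticeOf N r ∧
      Disjoint (latticeOf N t) (latticeOf N r)

/-!
A strictly convex cone admits a linear functional that is positive on its generators (Farkas'
lemma); clearing denominators over the finitely generated lattice `N` scales it to be at least `1`
on every nonzero lattice point of `σ`. Descending along this height, every lattice point of `σ` is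
a sum of generators and minimal vectors, so when all minimal vectors lie in `ω` it has the form
`∑ cᵢ vᵢ + y` with `y ∈ ω ∩ N`. Every point of `N_σ` is a difference of two lattice points of `σ`,
which gives `N_σ = ∑ ℤ vᵢ + N_ω`; the sum is direct because the `vᵢ` are linearly independent
from `ω`.
-/

section ConeSpan

variable {V : Type*} [AddCommGroup V] [Module ℚ V] {k m : ℕ}

lemma zero_mem_coneSpan (v : Fin k → V) : (0 : V) ∈ coneSpan v :=
  ⟨0, fun _ => le_rfl, by simp⟩

lemma add_mem_coneSpan {v : Fin k → V} {x y : V} (hx : x ∈ coneSpan v) (hy : y ∈ coneSpan v) :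
    x + y ∈ coneSpan v := by
  obtain ⟨c, hc, rfl⟩ := hx
  obtain ⟨d, hd, rfl⟩ := hy
  exact ⟨c + d, fun i => add_nonneg (hc i) (hd i), by simp [add_smul, Finset.sum_add_distrib]⟩

lemma smul_mem_coneSpan {v : Fin k → V} {x : V} {a : ℚ} (ha : 0 ≤ a) (hx : x ∈ coneSpan v) :
    a • x ∈ coneSpan v := by
  obtain ⟨c, hc, rfl⟩ := hx
  exact ⟨a • c, fun i => mul_nonneg ha (hc i), by simp [Finset.smul_sum, smul_smul]⟩

lemma sum_mem_coneSpan {v : Fin k → V} {ι : Type*} (s : Finset ι) {f : ι → V}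
    (h : ∀ i ∈ s, f i ∈ coneSpan v) : ∑ i ∈ s, f i ∈ coneSpan v :=
  Finset.sum_induction f (· ∈ coneSpan v) (fun _ _ => add_mem_coneSpan) (zero_mem_coneSpan v) h

lemma apply_mem_coneSpan (v : Fin k → V) (i : Fin k) : v i ∈ coneSpan v :=
  ⟨Pi.single i 1, fun j => by by_cases h : j = i <;> simp [h],
    by simp [Pi.single_apply]⟩

lemma coneSpan_subset {v : Fin k → V} {u : Fin m → V} (h : ∀ i, v i ∈ coneSpan u) :
    coneSpan v ⊆ coneSpan u := by
  rintro _ ⟨c, hc, rfl⟩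
  exact sum_mem_coneSpan _ fun i _ => smul_mem_coneSpan (hc i) (h i)

lemma coneSpan_subset_span (v : Fin k → V) : coneSpan v ⊆ Submodule.span ℚ (Set.range v) := by
  rintro _ ⟨c, -, rfl⟩
  exact Submodule.sum_mem _ fun i _ => Submodule.smul_mem _ _ (Submodule.subset_span ⟨i, rfl⟩)

lemma coneSpan_subset_coneSpan_cons (p : V) (u : Fin m → V) :
    coneSpan u ⊆ coneSpan (Fin.cons p u : Fin (m + 1) → V) :=
  coneSpan_subset fun i => by simpa using apply_mem_coneSpan (Fin.cons p u : Fin (m + 1) → V) i.succ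

lemma mem_coneSpan_cons {u : Fin m → V} {p x : V} {μ : ℚ} (hμ : 0 ≤ μ)
    (hx : x - μ • p ∈ coneSpan u) : x ∈ coneSpan (Fin.cons p u : Fin (m + 1) → V) := by
  obtain ⟨c, hc, hxc⟩ := hx
  refine ⟨Fin.cons μ c, Fin.forall_fin_succ.2 ⟨hμ, hc⟩, ?_⟩
  rw [Fin.sum_univ_succ]
  simp [← hxc]

lemma pos_of_mem_coneSpan {v : Fin k → V} {χ : V →ₗ[ℚ] ℚ} (hχ : ∀ i, 0 < χ (v i)) {x : V}
    (hx : x ∈ coneSpan v) (hx0 : x ≠ 0) : 0 < χ x := by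
  obtain ⟨c, hc, rfl⟩ := hx
  obtain ⟨i, hi⟩ : ∃ i, c i ≠ 0 := by
    by_contra! h
    exact hx0 (by simp [h])
  rw [map_sum]
  refine Finset.sum_pos' (fun j _ => ?_) ⟨i, Finset.mem_univ i, ?_⟩
  · rw [map_smul, smul_eq_mul]; exact mul_nonneg (hc j) (hχ j).le
  · rw [map_smul, smul_eq_mul]; exact mul_pos ((hc i).lt_of_ne' hi) (hχ i)

end ConeSpan

section Farkas

variable {V : Type*} [AddCommGroup V] [Module ℚ V] {m : ℕ}

/-- The projection onto `ker θ` along `p`, for `θ p ≠ 0`. -/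
def projAlong (θ : V →ₗ[ℚ] ℚ) (p : V) : V →ₗ[ℚ] V :=
  LinearMap.id - (θ p)⁻¹ • θ.smulRight p

lemma projAlong_apply (θ : V →ₗ[ℚ] ℚ) (p y : V) :
    projAlong θ p y = y - (θ y / θ p) • p := by
  simp [projAlong, smul_smul, div_eq_inv_mul]

lemma projAlong_self {θ : V →ₗ[ℚ] ℚ} {p : V} (hp : θ p ≠ 0) : projAlong θ p p = 0 := by
  simp [projAlong_apply, hp]

lemma mem_coneSpan_cons_of_projAlong_mem {θ : V →ₗ[ℚ] ℚ} {u : Fin m → V} {p x : V}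
    (hp : θ p < 0) (hu : ∀ i, 0 ≤ θ (u i)) (hx : θ x < 0)
    (h : projAlong θ p x ∈ coneSpan (projAlong θ p ∘ u)) :
    x ∈ coneSpan (Fin.cons p u : Fin (m + 1) → V) := by
  obtain ⟨c, hc, hxc⟩ := h
  set y := ∑ i, c i • u i
  have hxy : projAlong θ p (x - y) = 0 := by simp [y, hxc, map_sum]
  have hθxy : θ (x - y) < 0 := by
    have : 0 ≤ θ y := by
      simp only [y, map_sum, map_smul, smul_eq_mul]
      exact Finset.sum_nonneg fun i _ => mul_nonneg (hc i) (hu i)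
    rw [map_sub]; linarith
  refine mem_coneSpan_cons (μ := θ (x - y) / θ p) (div_nonneg_of_nonpos hθxy.le hp.le) ?_
  rw [projAlong_apply, sub_eq_zero] at hxy
  rw [← hxy, sub_sub_cancel]
  exact ⟨c, hc, rfl⟩

/-- Farkas' lemma for finitely generated cones, by Fourier–Motzkin elimination of one generator
at a time. -/
theorem exists_dual_nonneg_of_not_mem_coneSpan :
    ∀ {m : ℕ} (u : Fin m → V) {x : V}, x ∉ coneSpan u →
      ∃ θ : V →ₗ[ℚ] ℚ, (∀ i, 0 ≤ θ (u i)) ∧ θ x < 0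
  | 0, u, x, hx => by
    have hx0 : x ≠ 0 := fun h => hx (h ▸ zero_mem_coneSpan u)
    obtain ⟨f, hf⟩ : ∃ f : Module.Dual ℚ V, f x ≠ 0 := by
      by_contra! h
      exact hx0 ((Module.forall_dual_apply_eq_zero_iff ℚ x).1 h)
    refine ⟨-(f x) • f, finZeroElim, ?_⟩
    simpa using mul_self_pos.2 hf
  | m + 1, u, x, hx => by
    rw [← Fin.cons_self_tail u] at hx ⊢
    set p := u 0
    obtain ⟨θ, hθu, hθx⟩ :=
      exists_dual_nonneg_of_not_mem_coneSpan (Fin.tail u) fun h =>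
        hx (coneSpan_subset_coneSpan_cons p _ h)
    by_cases hθp : 0 ≤ θ p
    · exact ⟨θ, Fin.forall_fin_succ.2 ⟨hθp, hθu⟩, hθx⟩
    rw [not_le] at hθp
    obtain ⟨θ', hθ'u, hθ'x⟩ := exists_dual_nonneg_of_not_mem_coneSpan
      (projAlong θ p ∘ Fin.tail u) fun h => hx (mem_coneSpan_cons_of_projAlong_mem hθp hθu hθx h)
    refine ⟨θ' ∘ₗ projAlong θ p, Fin.forall_fin_succ.2 ⟨?_, hθ'u⟩, hθ'x⟩
    simp [projAlong_self hθp.ne]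

theorem exists_dual_pos_of_strictlyConvexCone :
    ∀ {m : ℕ} (u : Fin m → V), StrictlyConvexCone u → (∀ i, u i ≠ 0) →
      ∃ χ : V →ₗ[ℚ] ℚ, ∀ i, 0 < χ (u i)
  | 0, _, _, _ => ⟨0, finZeroElim⟩
  | m + 1, u, hsc, hu0 => by
    rw [← Fin.cons_self_tail u] at hsc ⊢
    set p := u 0
    have hsub := coneSpan_subset_coneSpan_cons p (Fin.tail u)
    obtain ⟨χ, hχ⟩ := exists_dual_pos_of_strictlyConvexCone (Fin.tail u)
      (fun x hx hnx => hsc x (hsub hx) (hsub hnx)) fun i => hu0 i.succ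
    have hnp : -p ∉ coneSpan (Fin.tail u) := fun h =>
      hu0 0 (hsc p (by simpa using apply_mem_coneSpan (Fin.cons p (Fin.tail u)) 0) (hsub h))
    obtain ⟨θ, hθu, hθp⟩ := exists_dual_nonneg_of_not_mem_coneSpan (Fin.tail u) hnp
    rw [map_neg, neg_neg_iff_pos] at hθp
    refine ⟨χ + ((|χ p| + 1) / θ p) • θ, Fin.forall_fin_succ.2 ⟨?_, fun i => ?_⟩⟩
    · simp only [Fin.cons_zero, LinearMap.add_apply, LinearMap.smul_apply, smul_eq_mul,
        div_mul_cancel₀ _ hθp.ne']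
      linarith [neg_abs_le (χ p)]
    · simp only [Fin.cons_succ, LinearMap.add_apply, LinearMap.smul_apply, smul_eq_mul]
      exact add_pos_of_pos_of_nonneg (hχ i) (mul_nonneg (by positivity) (hθu i))

end Farkas

section Lattice

variable {V : Type*} [AddCommGroup V] [Module ℚ V] {k : ℕ}

lemma exists_nat_mul_eq_intCast (N : Submodule ℤ V) [Module.Finite ℤ N] (χ : V →ₗ[ℚ] ℚ) :
    ∃ b : ℕ, 0 < b ∧ ∀ x ∈ N, ∃ z : ℤ, (z : ℚ) = b * χ x := by
  classical
  obtain ⟨S, rfl⟩ := Module.Finite.iff_fg.1 ‹Module.Finite ℤ N›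
  set b := ∏ t ∈ S, (χ t).den
  refine ⟨b, Finset.prod_pos fun t _ => (χ t).pos, fun x hx => ?_⟩
  have hS : Submodule.span ℤ S ≤
      (LinearMap.range (Algebra.linearMap ℤ ℚ)).comap ((b : ℚ) • χ.restrictScalars ℤ) := by
    rw [Submodule.span_le]
    intro t ht
    refine ⟨(∏ t' ∈ S.erase t, ((χ t').den : ℤ)) * (χ t).num, ?_⟩
    simp only [b, Algebra.linearMap_apply, ← Finset.mul_prod_erase S _ ht, LinearMap.smul_apply,
      LinearMap.restrictScalars_apply, smul_eq_mul]
    push_cast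
    linear_combination -(∏ t' ∈ S.erase t, ((χ t').den : ℚ)) * Rat.mul_den_eq_num (χ t)
  obtain ⟨z, hz⟩ := hS hx
  exact ⟨z, by simpa using hz⟩

lemma exists_dual_one_le_of_strictlyConvexCone (N : Submodule ℤ V) [Module.Finite ℤ N]
    {u : Fin k → V} (hsc : StrictlyConvexCone u) (hu0 : ∀ i, u i ≠ 0) :
    ∃ χ : V →ₗ[ℚ] ℚ, ∀ x ∈ coneSpan u, x ∈ N → x ≠ 0 → 1 ≤ χ x := by
  obtain ⟨χ, hχ⟩ := exists_dual_pos_of_strictlyConvexCone u hsc hu0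
  obtain ⟨b, hb, hbχ⟩ := exists_nat_mul_eq_intCast N χ
  refine ⟨(b : ℚ) • χ, fun x hx hxN hx0 => ?_⟩
  obtain ⟨z, hz⟩ := hbχ x hxN
  have hz0 : (0 : ℚ) < z := hz ▸ mul_pos (Nat.cast_pos.2 hb) (pos_of_mem_coneSpan hχ hx hx0)
  rw [LinearMap.smul_apply, smul_eq_mul, ← hz]
  exact_mod_cast (Int.cast_pos.1 hz0 : 0 < z)

theorem mem_closure_range_union_setOf_isMinimalVec (N : Submodule ℤ V) [Module.Finite ℤ N]
    {u : Fin k → V} (hsc : StrictlyConvexCone u) (hu0 : ∀ i, u i ≠ 0) {x : V}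
    (hx : x ∈ coneSpan u) (hxN : x ∈ N) :
    x ∈ AddSubmonoid.closure (Set.range u ∪ {y | IsMinimalVec N u y}) := by
  obtain ⟨χ, hχ⟩ := exists_dual_one_le_of_strictlyConvexCone N hsc hu0
  -- descent on a bound `n > χ x`: both parts of a decomposition `x = y + z` have height `< n - 1`
  obtain ⟨n, hn⟩ := exists_nat_gt (χ x)
  induction n generalizing x with
  | zero =>
    obtain rfl : x = 0 := by
      by_contra hx0
      have := hχ x hx hxN hx0
      push_cast at hn
      linarith
    exact zero_mem _
  | succ n ih =>
    by_cases hx0 : x = 0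
    · exact hx0 ▸ zero_mem _
    by_cases hgen : ∃ i, x = u i
    · obtain ⟨i, rfl⟩ := hgen
      exact AddSubmonoid.subset_closure (Or.inl ⟨i, rfl⟩)
    by_cases hdec : ∃ y z : V, y ∈ coneSpan u ∧ y ∈ N ∧ y ≠ 0 ∧
        z ∈ coneSpan u ∧ z ∈ N ∧ z ≠ 0 ∧ x = y + z
    · obtain ⟨y, z, hy, hyN, hy0, hz, hzN, hz0, rfl⟩ := hdec
      have hχyz := map_add χ y z
      have hχy := hχ y hy hyN hy0
      have hχz := hχ z hz hzN hz0
      push_cast at hn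
      exact add_mem (ih hy hyN (by linarith)) (ih hz hzN (by linarith))
    · exact AddSubmonoid.subset_closure
        (Or.inr ⟨hx, hxN, hx0, fun i h => hgen ⟨i, h⟩, hdec⟩)

end Lattice

section RelativelySimplicial

variable {V : Type*} [AddCommGroup V] [Module ℚ V] {N : Submodule ℤ V} {k s : ℕ}

lemma mem_latticeOf_of_mem_coneSpan {w : Fin s → V} {y : V} (hy : y ∈ coneSpan w) (hyN : y ∈ N) :
    y ∈ latticeOf N w :=
  ⟨hyN, coneSpan_subset_span w hy⟩

lemma natCast_smul_mem {x : V} (hx : x ∈ N) (n : ℕ) : (n : ℚ) • x ∈ N := by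
  rw [Nat.cast_smul_eq_nsmul]
  exact N.nsmul_mem hx n

lemma exists_sub_eq_of_mem_latticeOf {u : Fin k → V} (huN : ∀ i, u i ∈ N) {x : V}
    (hx : x ∈ latticeOf N u) :
    ∃ y z : V, y ∈ coneSpan u ∧ y ∈ N ∧ z ∈ coneSpan u ∧ z ∈ N ∧ x = y - z := by
  obtain ⟨hxN, hxspan⟩ := hx
  obtain ⟨r, rfl⟩ := (Submodule.mem_span_range_iff_exists_fun ℚ).1 hxspan
  set z := ∑ i, (⌈-r i⌉₊ : ℚ) • u i
  have hzN : z ∈ N := N.sum_mem fun i _ => natCast_smul_mem (huN i) _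
  refine ⟨∑ i, r i • u i + z, z, ⟨fun i => r i + ⌈-r i⌉₊, fun i => ?_, ?_⟩,
    N.add_mem hxN hzN, ⟨_, fun i => Nat.cast_nonneg _, rfl⟩, hzN, (add_sub_cancel_right _ _).symm⟩
  · linarith [Nat.le_ceil (-r i)]
  · simp [z, add_smul, Finset.sum_add_distrib]

lemma sum_smul_add_mem_coneSpan_append {v : Fin k → V} {w : Fin s → V} (hvN : ∀ i, v i ∈ N)
    (c : Fin k → ℕ) {y : V} (hy : y ∈ coneSpan w) (hyN : y ∈ N) :
    (∑ i, (c i : ℚ) • v i) + y ∈ coneSpan (Fin.append v w) ∧ (∑ i, (c i : ℚ) • v i) + y ∈ N := by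
  refine ⟨add_mem_coneSpan (sum_mem_coneSpan _ fun i _ => smul_mem_coneSpan (Nat.cast_nonneg _) ?_)
    (coneSpan_subset (fun j => ?_) hy), N.add_mem (N.sum_mem fun i _ => natCast_smul_mem (hvN i) _) hyN⟩
  · simpa using apply_mem_coneSpan (Fin.append v w) (Fin.castAdd s i)
  · simpa using apply_mem_coneSpan (Fin.append v w) (Fin.natAdd k j)

theorem exists_eq_sum_add_of_forall_isMinimalVec_mem [Module.Finite ℤ N] {v : Fin k → V}
    {w : Fin s → V} (hsc : StrictlyConvexCone (Fin.append v w))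
    (hu0 : ∀ i, Fin.append v w i ≠ 0) (hwN : ∀ j, w j ∈ N)
    (hnomin : ∀ x : V, IsMinimalVec N (Fin.append v w) x → x ∈ coneSpan w) {x : V}
    (hx : x ∈ coneSpan (Fin.append v w)) (hxN : x ∈ N) :
    ∃ (c : Fin k → ℕ) (y : V), y ∈ coneSpan w ∧ y ∈ N ∧ x = (∑ i, (c i : ℚ) • v i) + y := by
  classical
  have hcl := mem_closure_range_union_setOf_isMinimalVec N hsc hu0 hx hxN
  clear hx hxN
  induction hcl using AddSubmonoid.closure_induction with
  | mem x hgen =>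
    rcases hgen with ⟨i, rfl⟩ | hmin
    · induction i using Fin.addCases with
      | left i => exact ⟨Pi.single i 1, 0, zero_mem_coneSpan w, N.zero_mem, by simp [Pi.single_apply]⟩
      | right j => exact ⟨0, w j, apply_mem_coneSpan w j, hwN j, by simp⟩
    · exact ⟨0, x, hnomin x hmin, hmin.2.1, by simp⟩
  | zero => exact ⟨0, 0, zero_mem_coneSpan w, N.zero_mem, by simp⟩
  | add x x' _ _ hx hx' =>
    obtain ⟨c, y, hy, hyN, hxy⟩ := hx
    obtain ⟨c', y', hy', hy'N, hxy'⟩ := hx'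
    refine ⟨c + c', y + y', add_mem_coneSpan hy hy', N.add_mem hyN hy'N, ?_⟩
    simp only [hxy, hxy', Pi.add_apply, Nat.cast_add, add_smul, Finset.sum_add_distrib]
    abel

lemma latticeOf_append_eq_sup {v : Fin k → V} {w : Fin s → V}
    (huN : ∀ i, Fin.append v w i ∈ N)
    (hdecomp : ∀ x ∈ coneSpan (Fin.append v w), x ∈ N →
      ∃ (c : Fin k → ℕ) (y : V), y ∈ coneSpan w ∧ y ∈ N ∧ x = (∑ i, (c i : ℚ) • v i) + y) :
    latticeOf N (Fin.append v w) = Submodule.span ℤ (Set.range v) ⊔ latticeOf N w := by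
  refine le_antisymm (fun x hx => ?_) (sup_le ?_ ?_)
  · obtain ⟨y, z, hy, hyN, hz, hzN, rfl⟩ := exists_sub_eq_of_mem_latticeOf huN hx
    obtain ⟨c, y', hy', hy'N, rfl⟩ := hdecomp y hy hyN
    obtain ⟨c', z', hz', hz'N, rfl⟩ := hdecomp z hz hzN
    refine Submodule.mem_sup.2 ⟨∑ i, ((c i : ℤ) - c' i) • v i,
      Submodule.sum_mem _ fun i _ => Submodule.smul_mem _ _ (Submodule.subset_span ⟨i, rfl⟩),
      y' - z', sub_mem (mem_latticeOf_of_mem_coneSpan hy' hy'N)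
        (mem_latticeOf_of_mem_coneSpan hz' hz'N), ?_⟩
    simp only [← Int.cast_smul_eq_zsmul ℚ, Int.cast_sub, Int.cast_natCast, sub_smul,
      Finset.sum_sub_distrib]
    abel
  · rw [Submodule.span_le]
    rintro _ ⟨i, rfl⟩
    exact ⟨by simpa using huN (Fin.castAdd s i),
      Submodule.subset_span ⟨Fin.castAdd s i, Fin.append_left v w i⟩⟩
  · refine inf_le_inf_left N (Submodule.restrictScalars_mono ℤ (Submodule.span_mono ?_))
    rintro _ ⟨j, rfl⟩
    exact ⟨Fin.natAdd k j, Fin.append_right v w j⟩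

lemma disjoint_span_latticeOf {v : Fin k → V} {w : Fin s → V} (hrel : RelSimplicial v w) :
    Disjoint (Submodule.span ℤ (Set.range v)) (latticeOf N w) := by
  rw [Submodule.disjoint_def]
  rintro x hxv ⟨-, hxw⟩
  obtain ⟨a, rfl⟩ := (Submodule.mem_span_range_iff_exists_fun ℤ).1 hxv
  obtain ⟨d, hd⟩ := (Submodule.mem_span_range_iff_exists_fun ℚ).1 hxw
  have ha : ∀ i, (a i : ℚ) = 0 := hrel _ (-d) <| by
    simp only [Int.cast_smul_eq_zsmul, Pi.neg_apply, neg_smul, Finset.sum_neg_distrib, hd,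
      add_neg_cancel]
  simp [fun i => Int.cast_eq_zero.1 (ha i)]

end RelativelySimplicial

theorem relative_regular_of_no_relative_minimal_vectors_general
    {V : Type u} [AddCommGroup V] [Module ℚ V] (N : Submodule ℤ V) [Module.Finite ℤ ↥N]
    {k s : ℕ} (v : Fin k → V) (w : Fin s → V)
    (hsc : StrictlyConvexCone (Fin.append v w))
    (hrel : RelSimplicial v w)
    (hprim : ∀ idx, IsPrimitive N (Fin.append v w idx))
    (hnomin : ∀ x : V, IsMinimalVec N (Fin.append v w) x → x ∈ coneSpan w) :
    latticeOf N (Fin.append v w) = Submodule.span ℤ (Set.range v) ⊔ latticeOf N w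
      ∧ Disjoint (Submodule.span ℤ (Set.range v)) (latticeOf N w)
      ∧ ∀ x : V, (x ∈ coneSpan (Fin.append v w) ∧ x ∈ N) ↔
          ∃ (c : Fin k → ℕ) (y : V), y ∈ coneSpan w ∧ y ∈ N ∧
            x = (∑ i, (c i : ℚ) • v i) + y := by
  have huN : ∀ i, Fin.append v w i ∈ N := fun i => (hprim i).1
  have hvN : ∀ i, v i ∈ N := fun i => by simpa using huN (Fin.castAdd s i)
  have hwN : ∀ j, w j ∈ N := fun j => by simpa using huN (Fin.natAdd k j)
  have hdecomp := fun x => exists_eq_sum_add_of_forall_isMinimalVec_mem (x := x) hsc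
    (fun i => (hprim i).2.1) hwN hnomin
  refine ⟨latticeOf_append_eq_sup huN hdecomp, disjoint_span_latticeOf hrel, fun x => ?_⟩
  refine ⟨fun hx => hdecomp x hx.1 hx.2, ?_⟩
  rintro ⟨c, y, hy, hyN, rfl⟩
  exact sum_smul_add_mem_coneSpan_append hvN c hy hyN

/-- If a relatively simplicial pair `(σ, ω)` with
`σ = ⟨v₁,…,v_k, w₁,…,w_s⟩` and `ω = ⟨w₁,…,w_s⟩` a face of `σ` has no minimal vector
(i.e. every minimal vector of `σ` lies in `ω`), then the pair is regular:
`N_σ = ℤv₁ ⊕ … ⊕ ℤv_k ⊕ N_ω` and the monoid `σ ∩ N_σ` equals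
`ℕv₁ + … + ℕv_k + (ω ∩ N_ω)`. -/
theorem relative_regular_of_no_relative_minimal_vectors
    {V : Type u} [AddCommGroup V] [Module ℚ V] (N : Submodule ℤ V) [Module.Finite ℤ ↥N]
    {k s : ℕ} (v : Fin k → V) (w : Fin s → V)
    (hsc : StrictlyConvexCone (Fin.append v w))
    (hface : IsFaceOf (coneSpan (Fin.append v w)) (coneSpan w))
    (hrel : RelSimplicial v w)
    (hprim : ∀ idx, IsPrimitive N (Fin.append v w idx))
    (hnomin : ∀ x : V, IsMinimalVec N (Fin.append v w) x → x ∈ coneSpan w) :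
    latticeOf N (Fin.append v w) = Submodule.span ℤ (Set.range v) ⊔ latticeOf N w
      ∧ Disjoint (Submodule.span ℤ (Set.range v)) (latticeOf N w)
      ∧ ∀ x : V, (x ∈ coneSpan (Fin.append v w) ∧ x ∈ N) ↔
          ∃ (c : Fin k → ℕ) (y : V), y ∈ coneSpan w ∧ y ∈ N ∧
            x = (∑ i, (c i : ℚ) • v i) + y :=
  relative_regular_of_no_relative_minimal_vectors_general N v w hsc hrel hprim hnomin
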